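/- For every integer n ≥ 1, the packing number of C_4 □ P_n equals ⌈2n/3⌉. -/

import Mathlib

open SimpleGraph Finset
open scoped Classical

/-- Closed neighborhood of a vertex. -/
def closedNbr {V : Type*} (G : SimpleGraph V) (v : V) : Set V :=
  insert v (G.neighborSet v)

/-- `S` is an efficient dominating set: every vertex lies in the closed
neighborhood of exactly one vertex of `S`. -/
def IsEffDomSet {V : Type*} (G : SimpleGraph V) (S : Set V) : Prop :=
  ∀ v : V, ∃! u, u ∈ S ∧ v ∈ closedNbr G u

/-- `S` is a dominating set. -/
def IsDomSet {V : Type*} (G : SimpleGraph V) (S : Set V) : Prop :=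
  ∀ v : V, v ∉ S → ∃ u ∈ S, G.Adj u v

/-- The domination number. -/
noncomputable def domNumber {V : Type*} (G : SimpleGraph V) [Fintype V] : ℕ :=
  sInf {n | ∃ S : Set V, IsDomSet G S ∧ S.ncard = n}

/-- `f` is a `[k]`-Roman dominating function on `G`. -/
noncomputable def IsKRDF {V : Type*} (G : SimpleGraph V) [Fintype V] (k : ℕ) (f : V → ℕ) : Prop :=
  (∀ v, f v ≤ k + 1) ∧
  ∀ v : V, f v < k →
    f v + ∑ u ∈ univ.filter (fun u => G.Adj v u), f u ≥
      k + (univ.filter (fun u => G.Adj v u ∧ 0 < f u)).card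

/-- The `[k]`-Roman domination number. -/
noncomputable def kRoman {V : Type*} (G : SimpleGraph V) [Fintype V] (k : ℕ) : ℕ :=
  sInf {w | ∃ f : V → ℕ, IsKRDF G k f ∧ ∑ v, f v = w}

/-- `S` is a packing: closed neighborhoods of vertices in `S` are pairwise disjoint. -/
def IsPacking {V : Type*} (G : SimpleGraph V) (S : Set V) : Prop :=
  S.Pairwise fun u v => Disjoint (closedNbr G u) (closedNbr G v)

/-- The packing number. -/
noncomputable def packingNumber {V : Type*} (G : SimpleGraph V) [Fintype V] : ℕ :=
  sSup {n | ∃ S : Set V, IsPacking G S ∧ S.ncard = n}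

/-!
Since any two vertices of `C₄` have a common closed neighbour, two vertices of a packing of
`C₄ □ H` never share a column. If two lie in adjacent columns, they must sit in opposite rows
(`b = a + 2`); so vertices in three columns `i ~ j ~ k` would put two of them in the same row at
columns `i` and `k`, where they share the closed neighbour in column `j`. For `H = Pₙ` the occupied
columns therefore contain no three consecutive indices, which bounds the packing by
`⌈2n/3⌉ = (2n + 2) / 3`. Rows `0` and `2` placed alternately in the columns `≡ 0, 1 (mod 3)`
attain the bound.
-/

variable {α β : Type*} {G : SimpleGraph α} {H : SimpleGraph β}

theorem packingNumber_eq_ncard [Fintype α] {S : Set α} (hS : IsPacking G S)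
    (hmax : ∀ T : Set α, IsPacking G T → T.ncard ≤ S.ncard) : packingNumber G = S.ncard :=
  IsGreatest.csSup_eq ⟨⟨S, hS, rfl⟩, by rintro _ ⟨T, hT, rfl⟩; exact hmax T hT⟩

lemma mem_closedNbr {a b : α} : b ∈ closedNbr G a ↔ b = a ∨ G.Adj a b := Iff.rfl

lemma closedNbr_boxProd (a : α) (i : β) :
    closedNbr (G □ H) (a, i) = closedNbr G a ×ˢ {i} ∪ {a} ×ˢ closedNbr H i := by
  ext ⟨b, j⟩
  simp only [mem_closedNbr, boxProd_adj, Set.mem_union, Set.mem_prod, Set.mem_singleton_iff,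
    Prod.mk.injEq]
  tauto

lemma disjoint_closedNbr_boxProd_iff {a b : α} {i j : β} :
    Disjoint (closedNbr (G □ H) (a, i)) (closedNbr (G □ H) (b, j)) ↔
      (Disjoint (closedNbr G a) (closedNbr G b) ∨ i ≠ j) ∧
      (b ∉ closedNbr G a ∨ i ∉ closedNbr H j) ∧
      (a ∉ closedNbr G b ∨ j ∉ closedNbr H i) ∧
      (a ≠ b ∨ Disjoint (closedNbr H i) (closedNbr H j)) := by
  simp only [closedNbr_boxProd, Set.disjoint_union_left, Set.disjoint_union_right,
    Set.disjoint_prod, Set.disjoint_singleton_left, Set.disjoint_singleton_right]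
  tauto

lemma disjoint_closedNbr_boxProd_of_disjoint_snd {i j : β}
    (h : Disjoint (closedNbr H i) (closedNbr H j)) (a b : α) :
    Disjoint (closedNbr (G □ H) (a, i)) (closedNbr (G □ H) (b, j)) := by
  have hi : i ∉ closedNbr H j := Set.disjoint_left.mp h (Set.mem_insert i _)
  have hj : j ∉ closedNbr H i := Set.disjoint_right.mp h (Set.mem_insert j _)
  have hij : i ≠ j := by rintro rfl; exact hi (Set.mem_insert i _)
  rw [disjoint_closedNbr_boxProd_iff]
  tauto

theorem IsPacking.injOn_snd (hG : ∀ a b : α, ¬Disjoint (closedNbr G a) (closedNbr G b))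
    {S : Set (α × β)} (hS : IsPacking (G □ H) S) : S.InjOn Prod.snd := by
  rintro ⟨a, i⟩ hu ⟨b, j⟩ hv (rfl : i = j)
  by_contra hne
  have := (disjoint_closedNbr_boxProd_iff.mp (hS hu hv hne)).1
  tauto

lemma fin_four_add_two_add_two (a : Fin 4) : a + 2 + 2 = a := by
  revert a
  decide

lemma cycleGraph_four_not_disjoint_closedNbr (a b : Fin 4) :
    ¬Disjoint (closedNbr (cycleGraph 4) a) (closedNbr (cycleGraph 4) b) := by
  simp only [Set.not_disjoint_iff, mem_closedNbr]
  revert a b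
  decide

lemma cycleGraph_four_mem_closedNbr_or_eq_add_two (a b : Fin 4) :
    b ∈ closedNbr (cycleGraph 4) a ∨ b = a + 2 := by
  rw [mem_closedNbr]
  revert a b
  decide

lemma disjoint_closedNbr_cycleGraph_four_boxProd {i j : β} (hij : i ≠ j) (a : Fin 4) :
    Disjoint (closedNbr (cycleGraph 4 □ H) (a, i))
      (closedNbr (cycleGraph 4 □ H) (a + 2, j)) := by
  have hmem : ∀ a : Fin 4, a + 2 ∉ closedNbr (cycleGraph 4) a := by
    simp only [mem_closedNbr]
    decide
  have := hmem a
  have := hmem (a + 2)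
  rw [fin_four_add_two_add_two] at this
  rw [disjoint_closedNbr_boxProd_iff]
  tauto

theorem IsPacking.fst_eq_add_two {S : Set (Fin 4 × β)} (hS : IsPacking (cycleGraph 4 □ H) S)
    {u v : Fin 4 × β} (hu : u ∈ S) (hv : v ∈ S) (huv : H.Adj u.2 v.2) : v.1 = u.1 + 2 := by
  have hne : u ≠ v := fun h => huv.ne (congrArg Prod.snd h)
  have := (disjoint_closedNbr_boxProd_iff.mp (hS hu hv hne)).2.1
  have : u.2 ∈ closedNbr H v.2 := Or.inr huv.symm
  have := cycleGraph_four_mem_closedNbr_or_eq_add_two u.1 v.1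
  tauto

theorem IsPacking.not_three_adj_snd {S : Set (Fin 4 × β)} (hS : IsPacking (cycleGraph 4 □ H) S)
    {u v w : Fin 4 × β} (hu : u ∈ S) (hv : v ∈ S) (hw : w ∈ S)
    (huv : H.Adj u.2 v.2) (hvw : H.Adj v.2 w.2) (huw : u.2 ≠ w.2) : False := by
  have hrow : u.1 = w.1 := by
    rw [hS.fst_eq_add_two hv hw hvw, hS.fst_eq_add_two hu hv huv, fin_four_add_two_add_two]
  have hcommon : ¬Disjoint (closedNbr H u.2) (closedNbr H w.2) :=
    Set.not_disjoint_iff.mpr ⟨v.2, Or.inr huv, Or.inr hvw.symm⟩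
  have huw' : u ≠ w := fun h => huw (congrArg Prod.snd h)
  have := (disjoint_closedNbr_boxProd_iff.mp (hS hu hw huw')).2.2.2
  tauto

lemma Finset.card_le_of_not_three_consecutive {m : ℕ} {T : Finset ℕ} (hT : T ⊆ range m)
    (h : ∀ j, j ∈ T → j + 1 ∈ T → j + 2 ∉ T) : #T ≤ (2 * m + 2) / 3 := by
  induction m using Nat.strong_induction_on generalizing T with
  | _ m ih =>
  by_cases hm : m < 3
  · have := card_le_card hT
    rw [card_range] at this
    omega
  have hlow : #(T.filter (· < m - 3)) ≤ (2 * (m - 3) + 2) / 3 :=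
    ih (m - 3) (by omega) (fun x hx => mem_range.mpr (mem_filter.mp hx).2)
      (fun j hj hj1 hj2 => h j (mem_filter.mp hj).1 (mem_filter.mp hj1).1 (mem_filter.mp hj2).1)
  have hhigh : #(T.filter (¬· < m - 3)) < #(Ico (m - 3) m) := by
    refine card_lt_card ⟨fun x hx => ?_, fun hsub => ?_⟩
    · have := mem_range.mp (hT (mem_filter.mp hx).1)
      have := (mem_filter.mp hx).2
      exact mem_Ico.mpr ⟨by omega, by omega⟩
    · have mem : ∀ x, m - 3 ≤ x → x < m → x ∈ T := fun x h1 h2 =>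
        (mem_filter.mp (hsub (mem_Ico.mpr ⟨h1, h2⟩))).1
      exact h (m - 3) (mem _ le_rfl (by omega)) (mem _ (by omega) (by omega))
        (mem _ (by omega) (by omega))
  rw [Nat.card_Ico] at hhigh
  have := card_filter_add_card_filter_not (s := T) (p := (· < m - 3))
  omega

lemma mem_closedNbr_pathGraph {n : ℕ} {i j : Fin n} :
    j ∈ closedNbr (pathGraph n) i ↔ (j : ℕ) ≤ i + 1 ∧ (i : ℕ) ≤ j + 1 := by
  rw [mem_closedNbr, pathGraph_adj, Fin.ext_iff]
  omega

theorem IsPacking.ncard_le_of_cycleGraph_four_boxProd_pathGraph {n : ℕ}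
    {S : Set (Fin 4 × Fin n)} (hS : IsPacking (cycleGraph 4 □ pathGraph n) S) :
    S.ncard ≤ (2 * n + 2) / 3 := by
  have hinj : S.InjOn fun p => (p.2 : ℕ) :=
    Fin.val_injective.injOn.comp (hS.injOn_snd cycleGraph_four_not_disjoint_closedNbr)
      (Set.mapsTo_univ _ _)
  rw [Set.ncard_eq_toFinset_card', ← card_image_of_injOn (by simpa using hinj)]
  refine card_le_of_not_three_consecutive (fun x hx => ?_) fun j hj hj1 hj2 => ?_
  · obtain ⟨p, -, rfl⟩ := mem_image.mp hx
    exact mem_range.mpr p.2.isLt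
  obtain ⟨u, hu, hu2⟩ := mem_image.mp hj
  obtain ⟨v, hv, hv2⟩ := mem_image.mp hj1
  obtain ⟨w, hw, hw2⟩ := mem_image.mp hj2
  simp only [Set.mem_toFinset] at hu hv hw
  refine hS.not_three_adj_snd hu hv hw ?_ ?_ ?_
  · exact pathGraph_adj.mpr (Or.inl (by omega))
  · exact pathGraph_adj.mpr (Or.inl (by omega))
  · exact fun h => by have := congrArg Fin.val h; omega

lemma disjoint_closedNbr_pathGraph {n : ℕ} {i j : Fin n}
    (h : (i : ℕ) + 3 ≤ j ∨ (j : ℕ) + 3 ≤ i) :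
    Disjoint (closedNbr (pathGraph n) i) (closedNbr (pathGraph n) j) := by
  refine Set.disjoint_left.mpr fun k hi hj => ?_
  rw [mem_closedNbr_pathGraph] at hi hj
  omega

def zigzagPacking (n : ℕ) : Set (Fin 4 × Fin n) :=
  (fun j : Fin n => (if (j : ℕ) % 3 = 0 then 0 else 2, j)) '' {j | (j : ℕ) % 3 ≠ 2}

theorem isPacking_zigzagPacking (n : ℕ) :
    IsPacking (cycleGraph 4 □ pathGraph n) (zigzagPacking n) := by
  rintro _ ⟨i, hi, rfl⟩ _ ⟨j, hj, rfl⟩ hne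
  dsimp only
  have hij : i ≠ j := by rintro rfl; exact hne rfl
  replace hi : (i : ℕ) % 3 ≠ 2 := hi
  replace hj : (j : ℕ) % 3 ≠ 2 := hj
  by_cases hmod : (i : ℕ) % 3 = (j : ℕ) % 3
  · exact disjoint_closedNbr_boxProd_of_disjoint_snd (disjoint_closedNbr_pathGraph (by omega)) _ _
  by_cases hi0 : (i : ℕ) % 3 = 0
  · have hj0 : ¬(j : ℕ) % 3 = 0 := by omega
    rw [if_pos hi0, if_neg hj0]
    exact disjoint_closedNbr_cycleGraph_four_boxProd hij 0
  · have hj0 : (j : ℕ) % 3 = 0 := by omega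
    rw [if_neg hi0, if_pos hj0]
    exact disjoint_closedNbr_cycleGraph_four_boxProd hij 2

lemma Nat.count_mod_three_ne_two (n : ℕ) : Nat.count (· % 3 ≠ 2) n = (2 * n + 2) / 3 := by
  induction n with
  | zero => rfl
  | succ n ih =>
    rw [Nat.count_succ, ih]
    split_ifs <;> grind

theorem ncard_zigzagPacking (n : ℕ) : (zigzagPacking n).ncard = (2 * n + 2) / 3 := by
  rw [zigzagPacking, Set.ncard_image_of_injective _ fun i j h => congrArg Prod.snd h,
    ← Nat.count_mod_three_ne_two, Nat.count_eq_card_filter_range, Set.ncard_eq_toFinset_card',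
    ← card_map Fin.valEmbedding]
  congr 1
  ext x
  simp only [mem_map, Set.mem_toFinset, Set.mem_ofPred_eq, Fin.valEmbedding_apply, mem_filter,
    mem_range]
  exact ⟨fun ⟨j, hj, hjx⟩ => hjx ▸ ⟨j.isLt, hj⟩,
    fun ⟨hx, hx3⟩ => ⟨⟨x, hx⟩, hx3, rfl⟩⟩

theorem packingNumber_cycleGraph_four_boxProd_pathGraph (n : ℕ) :
    packingNumber (cycleGraph 4 □ pathGraph n) = (2 * n + 2) / 3 := by
  rw [← ncard_zigzagPacking]
  refine packingNumber_eq_ncard (isPacking_zigzagPacking n) fun T hT => ?_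
  rw [ncard_zigzagPacking]
  exact hT.ncard_le_of_cycleGraph_four_boxProd_pathGraph

theorem stmt17_general (n : ℕ) :
    (packingNumber ((cycleGraph 4).boxProd (pathGraph n)) : ℤ) = ⌈(2 * n : ℚ) / 3⌉ := by
  have hceil := Rat.ceil_natCast_div_natCast (2 * n) 3
  push_cast at hceil
  rw [packingNumber_cycleGraph_four_boxProd_pathGraph, hceil]
  omega

theorem stmt17 (n : ℕ) (hn : 1 ≤ n) :
    (packingNumber ((cycleGraph 4).boxProd (pathGraph n)) : ℤ) = ⌈(2 * n : ℚ) / 3⌉ :=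
  stmt17_general n
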